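/- Let n ≥ 2 and let C = (C_{j;i}) be a real n×n matrix with C_{n;i} = 0 for all i. Define the torsion-type tensor T⁰ by: T⁰_{ab}^c = 0 for a < b < n and c < n; T⁰_{ab}^n = C_{a;b} − C_{b;a} for a < b < n; T⁰_{an}^a = C_{a;a} for a < n; T⁰_{an}^n = C_{a;n} for a < n; and T⁰_{an}^c = (C_{a;c} + C_{c;a})/2 for a ≠ c with a, c < n (extended skew-symmetrically in the lower indices). Then T⁰ satisfies all n compatibility equations, and for every torsion-type tensor T ≠ T⁰ satisfying all n compatibility equations one has Σ_{a<b, c} (T⁰_{ab}^c)² < Σ_{a<b, c} (T_{ab}^c)². In other words, T⁰ is the unique solution of minimal norm, where ‖T‖² := Σ_{a<b, c} (T_{ab}^c)². -/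
import Mathlib


open Finset

/-- The last index `n` of `{1,…,n}`, realized as the final element of `Fin n`. -/
def lastIdx (n : ℕ) (hn : 1 ≤ n) : Fin n := ⟨n - 1, by omega⟩

/-- The coefficient `σ_{ab;i}^c(y) = (δᵢᶜyₐ + δᵢᵃy_c)δ_bⁿ + (δᵢᵇyₐ − δᵢᵃy_b)δ_cⁿ` of the
torsion component `T_{ab}^c` in the `i`-th compatibility equation of a Randers metric. -/
noncomputable def sigma (n : ℕ) (hn : 1 ≤ n) (a b c i : Fin n) (y : Fin n → ℝ) : ℝ :=
  ((if i = c then (1 : ℝ) else 0) * y a + (if i = a then (1 : ℝ) else 0) * y c) *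
      (if b = lastIdx n hn then (1 : ℝ) else 0) +
    ((if i = b then (1 : ℝ) else 0) * y a - (if i = a then (1 : ℝ) else 0) * y b) *
      (if c = lastIdx n hn then (1 : ℝ) else 0)

/-- A torsion-type tensor: a family `T_{ab}^c` of reals, skew-symmetric in the lower
indices. -/
def IsSkew (n : ℕ) (T : Fin n → Fin n → Fin n → ℝ) : Prop :=
  ∀ a b c, T a b c = - T b a c

/-- The left-hand side `Σ_{a<b, c} σ_{ab;i}^c(y)·T_{ab}^c` of the `i`-th compatibility
equation. -/
noncomputable def compatLHS (n : ℕ) (hn : 1 ≤ n) (T : Fin n → Fin n → Fin n → ℝ)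
    (i : Fin n) (y : Fin n → ℝ) : ℝ :=
  ∑ a : Fin n, ∑ b : Fin n, ∑ c : Fin n,
    if a < b then sigma n hn a b c i y * T a b c else 0

noncomputable def coefFn (n : ℕ) (hn : 1 ≤ n) (T : Fin n → Fin n → Fin n → ℝ)
    (i j : Fin n) : ℝ :=
  (if j < lastIdx n hn then T j (lastIdx n hn) i else 0)
  + (if i < lastIdx n hn then T i (lastIdx n hn) j else 0)
  + (if j < i then T j i (lastIdx n hn) else 0)
  - (if i < j then T i j (lastIdx n hn) else 0)

lemma sum_if_eq_right {n : ℕ} (x : Fin n) (P : Fin n → Prop) [DecidablePred P]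
    (f : Fin n → ℝ) :
    (∑ b : Fin n, if P b ∧ b = x then f b else 0) = if P x then f x else 0 := by
  rw [Finset.sum_eq_single x]
  · by_cases h : P x <;> simp [h]
  · intro b _ hb; simp [hb]
  · intro h; exact absurd (mem_univ x) h

lemma sum_if_eq_left {n : ℕ} (x : Fin n) (P : Fin n → Prop) [DecidablePred P]
    (f : Fin n → ℝ) :
    (∑ b : Fin n, if P b ∧ x = b then f b else 0) = if P x then f x else 0 := by
  rw [Finset.sum_eq_single x]
  · by_cases h : P x <;> simp [h]
  · intro b _ hb
    exact if_neg (by rintro ⟨-, h⟩; exact hb h.symm)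
  · intro h; exact absurd (mem_univ x) h

lemma sum_if_const {n : ℕ} (p : Prop) [Decidable p] (f : Fin n → ℝ) :
    (∑ c : Fin n, if p then f c else 0) = if p then ∑ c : Fin n, f c else 0 := by
  split_ifs <;> simp

set_option maxHeartbeats 1000000 in
lemma compatLHS_eq (n : ℕ) (hn : 1 ≤ n) (T : Fin n → Fin n → Fin n → ℝ)
    (i : Fin n) (y : Fin n → ℝ) :
    compatLHS n hn T i y = ∑ j : Fin n, coefFn n hn T i j * y j := by
  set N := lastIdx n hn with hN
  have expand : ∀ a b c : Fin n,
      (if a < b then sigma n hn a b c i y * T a b c else 0)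
      = (if (a < b ∧ b = N) ∧ i = c then y a * T a b c else 0)
      + (if (a < b ∧ i = a) ∧ b = N then y c * T a b c else 0)
      + (if (a < b ∧ i = b) ∧ c = N then y a * T a b c else 0)
      - (if (a < b ∧ i = a) ∧ c = N then y b * T a b c else 0) := by
    intro a b c
    by_cases h1 : a < b <;> by_cases h2 : b = N <;> by_cases h3 : c = N <;>
      by_cases h4 : i = a <;> by_cases h5 : i = b <;> by_cases h6 : i = c <;>
      simp only [sigma, ← hN, h1, h2, h3, h4, h5, h6, if_true, if_false, ite_true,
        ite_false, and_true, and_false, true_and, false_and, not_false_iff,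
        eq_self_iff_true] <;>
      (try ring) <;> (split_ifs <;> (try ring) <;> tauto)
  have step1 : ∀ a b : Fin n,
      (∑ c : Fin n, if a < b then sigma n hn a b c i y * T a b c else 0)
      = (if a < b ∧ b = N then y a * T a b i else 0)
      + (if (a < b ∧ i = a) ∧ b = N then ∑ c : Fin n, y c * T a b c else 0)
      + (if a < b ∧ i = b then y a * T a b N else 0)
      - (if a < b ∧ i = a then y b * T a b N else 0) := by
    intro a b
    rw [Finset.sum_congr rfl fun c _ => expand a b c,
      Finset.sum_sub_distrib, Finset.sum_add_distrib, Finset.sum_add_distrib,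
      sum_if_eq_left i (fun _ => a < b ∧ b = N) (fun c => y a * T a b c),
      sum_if_const ((a < b ∧ i = a) ∧ b = N) (fun c => y c * T a b c),
      sum_if_eq_right N (fun _ => a < b ∧ i = b) (fun c => y a * T a b c),
      sum_if_eq_right N (fun _ => a < b ∧ i = a) (fun c => y b * T a b c)]
  have step2 : ∀ a : Fin n,
      (∑ b : Fin n, ∑ c : Fin n, if a < b then sigma n hn a b c i y * T a b c else 0)
      = (if a < N then y a * T a N i else 0)
      + (if a < N ∧ i = a then ∑ c : Fin n, y c * T a N c else 0)
      + (if a < i then y a * T a i N else 0)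
      - (if i = a then ∑ b : Fin n, (if a < b then y b * T a b N else 0) else 0) := by
    intro a
    rw [Finset.sum_congr rfl fun b _ => step1 a b,
      Finset.sum_sub_distrib, Finset.sum_add_distrib, Finset.sum_add_distrib,
      sum_if_eq_right N (fun b => a < b) (fun b => y a * T a b i),
      sum_if_eq_right N (fun b => a < b ∧ i = a) (fun b => ∑ c : Fin n, y c * T a b c),
      sum_if_eq_left i (fun b => a < b) (fun b => y a * T a b N)]
    congr 1
    by_cases h : i = a
    · rw [if_pos h]
      exact Finset.sum_congr rfl fun b _ => by simp [h]
    · rw [if_neg h]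
      exact Finset.sum_eq_zero fun b _ => by simp [h]
  unfold compatLHS
  rw [Finset.sum_congr rfl fun a _ => step2 a,
    Finset.sum_sub_distrib, Finset.sum_add_distrib, Finset.sum_add_distrib,
    sum_if_eq_left i (fun a => a < N) (fun a => ∑ c : Fin n, y c * T a N c),
    Finset.sum_ite_eq univ i (fun a => ∑ b : Fin n, (if a < b then y b * T a b N else 0))]
  simp only [coefFn, add_mul, sub_mul, ite_mul, zero_mul]
  rw [Finset.sum_sub_distrib, Finset.sum_add_distrib, Finset.sum_add_distrib]
  congr 1
  congr 1
  congr 1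
  · exact Finset.sum_congr rfl fun j _ => by split_ifs <;> ring
  · rw [sum_if_const (i < N) (fun j => T i N j * y j)]
    split_ifs
    · exact Finset.sum_congr rfl fun j _ => by ring
    · rfl
  · exact Finset.sum_congr rfl fun j _ => by split_ifs <;> ring
  · simp only [mem_univ, if_true]
    exact Finset.sum_congr rfl fun j _ => by split_ifs <;> ring

lemma lt_or_eq_lastIdx {n : ℕ} (hn : 1 ≤ n) (k : Fin n) :
    k < lastIdx n hn ∨ k = lastIdx n hn := by
  have hk := k.isLt
  rcases Nat.lt_or_ge k.val (n - 1) with h | h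
  · exact Or.inl (by simpa [lastIdx, Fin.lt_def] using h)
  · right
    apply Fin.ext
    simp only [lastIdx]
    omega

lemma not_last_lt {n : ℕ} (hn : 1 ≤ n) (k : Fin n) : ¬ lastIdx n hn < k := by
  rcases lt_or_eq_lastIdx hn k with h | h
  · exact not_lt.mpr h.le
  · exact not_lt.mpr h.le

lemma coef_of_compat {n : ℕ} (hn : 1 ≤ n) (T : Fin n → Fin n → Fin n → ℝ)
    (C : Fin n → Fin n → ℝ) (i : Fin n)
    (h : ∀ y : Fin n → ℝ, compatLHS n hn T i y = 2 * ∑ j : Fin n, C j i * y j)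
    (j : Fin n) : coefFn n hn T i j = 2 * C j i := by
  have := h (fun k => if k = j then (1 : ℝ) else 0)
  rw [compatLHS_eq] at this
  simpa [mul_ite, mul_one, mul_zero, Finset.sum_ite_eq'] using this

lemma coefFn_sub {n : ℕ} (hn : 1 ≤ n) (T S : Fin n → Fin n → Fin n → ℝ) (i j : Fin n) :
    coefFn n hn (fun a b c => T a b c - S a b c) i j
      = coefFn n hn T i j - coefFn n hn S i j := by
  simp only [coefFn]
  split_ifs <;> ring

lemma coefFn_T₀ {n : ℕ} (hn : 1 ≤ n) (C : Fin n → Fin n → ℝ)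
    (hC : ∀ i : Fin n, C (lastIdx n hn) i = 0)
    (T₀ : Fin n → Fin n → Fin n → ℝ)
    (h₂ : ∀ a b : Fin n, a < b → b < lastIdx n hn →
      T₀ a b (lastIdx n hn) = C a b - C b a)
    (h₃ : ∀ a : Fin n, a < lastIdx n hn → T₀ a (lastIdx n hn) a = C a a)
    (h₄ : ∀ a : Fin n, a < lastIdx n hn →
      T₀ a (lastIdx n hn) (lastIdx n hn) = C a (lastIdx n hn))
    (h₅ : ∀ a c : Fin n, a < lastIdx n hn → c < lastIdx n hn → a ≠ c →
      T₀ a (lastIdx n hn) c = (C a c + C c a) / 2)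
    (i j : Fin n) : coefFn n hn T₀ i j = 2 * C j i := by
  set N := lastIdx n hn with hN
  unfold coefFn
  rcases lt_or_eq_lastIdx hn j with hj | hj
  · rcases lt_or_eq_lastIdx hn i with hi | hi
    · rcases lt_trichotomy i j with hij | hij | hij
      · rw [if_pos hj, if_pos hi, if_neg (asymm hij), if_pos hij,
          h₅ j i hj hi (ne_of_gt hij), h₅ i j hi hj (ne_of_lt hij), h₂ i j hij hj]
        ring
      · subst hij
        rw [if_pos hj, if_neg (lt_irrefl i), h₃ i hj]
        ring
      · rw [if_pos hj, if_pos hi, if_pos hij, if_neg (asymm hij),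
          h₅ j i hj hi (ne_of_lt hij), h₅ i j hi hj (ne_of_gt hij), h₂ j i hij hi]
        ring
    · subst hi
      rw [if_pos hj, if_neg (lt_irrefl N), if_neg (not_last_lt hn j), h₄ j hj, ← hN]
      ring
  · subst hj
    rw [if_neg (lt_irrefl N), if_neg (not_last_lt hn i), hC i]
    rcases lt_or_eq_lastIdx hn i with hi | hi
    · rw [if_pos hi]
      ring
    · subst hi
      ring

/-- the explicitly given torsion-type tensor `T⁰` (zero on the front short
blocks, `T⁰_{ab}^n = C_{a;b} − C_{b;a}` for `a < b < n`, `T⁰_{an}^a = C_{a;a}`,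
`T⁰_{an}^n = C_{a;n}`, `T⁰_{an}^c = (C_{a;c} + C_{c;a})/2` for `a ≠ c < n`) satisfies all
`n` compatibility equations, and it is the unique solution of minimal norm
`‖T‖² = Σ_{a<b,c} (T_{ab}^c)²`. -/
theorem extremal_torsion (n : ℕ) (hn : 2 ≤ n) (C : Fin n → Fin n → ℝ)
    (hC : ∀ i : Fin n, C (lastIdx n (by omega)) i = 0)
    (T₀ : Fin n → Fin n → Fin n → ℝ) (hT₀ : IsSkew n T₀)
    (h₁ : ∀ a b c : Fin n, a < b → b < lastIdx n (by omega) → c < lastIdx n (by omega) →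
      T₀ a b c = 0)
    (h₂ : ∀ a b : Fin n, a < b → b < lastIdx n (by omega) →
      T₀ a b (lastIdx n (by omega)) = C a b - C b a)
    (h₃ : ∀ a : Fin n, a < lastIdx n (by omega) →
      T₀ a (lastIdx n (by omega)) a = C a a)
    (h₄ : ∀ a : Fin n, a < lastIdx n (by omega) →
      T₀ a (lastIdx n (by omega)) (lastIdx n (by omega)) = C a (lastIdx n (by omega)))
    (h₅ : ∀ a c : Fin n, a < lastIdx n (by omega) → c < lastIdx n (by omega) → a ≠ c →
      T₀ a (lastIdx n (by omega)) c = (C a c + C c a) / 2) :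
    (∀ i : Fin n, ∀ y : Fin n → ℝ,
        compatLHS n (by omega) T₀ i y = 2 * ∑ j : Fin n, C j i * y j) ∧
      ∀ T : Fin n → Fin n → Fin n → ℝ, IsSkew n T →
        (∀ i : Fin n, ∀ y : Fin n → ℝ,
          compatLHS n (by omega) T i y = 2 * ∑ j : Fin n, C j i * y j) →
        T ≠ T₀ →
        (∑ a : Fin n, ∑ b : Fin n, ∑ c : Fin n, if a < b then (T₀ a b c) ^ 2 else 0) <
          (∑ a : Fin n, ∑ b : Fin n, ∑ c : Fin n, if a < b then (T a b c) ^ 2 else 0) := by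
  have hn1 : 1 ≤ n := by omega
  set N := lastIdx n hn1 with hN
  have hC' : ∀ i : Fin n, C N i = 0 := hC
  have h₁' : ∀ a b c : Fin n, a < b → b < N → c < N → T₀ a b c = 0 := h₁
  have h₂' : ∀ a b : Fin n, a < b → b < N → T₀ a b N = C a b - C b a := h₂
  have h₃' : ∀ a : Fin n, a < N → T₀ a N a = C a a := h₃
  have h₄' : ∀ a : Fin n, a < N → T₀ a N N = C a N := h₄
  have h₅' : ∀ a c : Fin n, a < N → c < N → a ≠ c → T₀ a N c = (C a c + C c a) / 2 := h₅
  have key₀ : ∀ i j : Fin n, coefFn n hn1 T₀ i j = 2 * C j i :=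
    coefFn_T₀ hn1 C hC' T₀ h₂' h₃' h₄' h₅'
  constructor
  · intro i y
    rw [compatLHS_eq, Finset.mul_sum]
    refine Finset.sum_congr rfl fun j _ => ?_
    show coefFn n hn1 T₀ i j * y j = 2 * (C j i * y j)
    rw [key₀ i j]; ring
  · intro T hT hTc hne
    set D : Fin n → Fin n → Fin n → ℝ := fun a b c => T a b c - T₀ a b c with hD
    have hDval : ∀ a b c : Fin n, D a b c = T a b c - T₀ a b c := fun a b c => rfl
    have hDsk : ∀ a b c : Fin n, D a b c = - D b a c := by
      intro a b c
      rw [hDval, hDval, hT a b c, hT₀ a b c]; ring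
    have keyD : ∀ i j : Fin n, coefFn n hn1 D i j = 0 := by
      intro i j
      rw [hD, coefFn_sub hn1 T T₀ i j, coef_of_compat hn1 T C i (hTc i) j, key₀ i j]
      ring
    have f1 : ∀ a : Fin n, a < N → D a N a = 0 := by
      intro a ha
      have h := keyD a a
      unfold coefFn at h
      rw [← hN, if_pos ha, if_neg (lt_irrefl a)] at h
      linarith
    have f2 : ∀ a : Fin n, a < N → D a N N = 0 := by
      intro a ha
      have h := keyD N a
      unfold coefFn at h
      rw [← hN, if_pos ha, if_neg (lt_irrefl N), if_neg (not_last_lt hn1 a)] at h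
      linarith
    have f3 : ∀ a c : Fin n, a < c → c < N → D a c N = 0 ∧ D a N c = - D c N a := by
      intro a c hac hc
      have ha : a < N := lt_trans hac hc
      have e1 := keyD c a
      unfold coefFn at e1
      rw [← hN, if_pos ha, if_pos hc, if_pos hac, if_neg (asymm hac)] at e1
      have e2 := keyD a c
      unfold coefFn at e2
      rw [← hN, if_pos hc, if_pos ha, if_neg (asymm hac), if_pos hac] at e2
      constructor <;> linarith
    have f4 : ∀ a c : Fin n, a < N → c < N → D a N c = - D c N a := by
      intro a c ha hc
      rcases lt_trichotomy a c with h | h | h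
      · exact (f3 a c h hc).2
      · subst h; rw [f1 a ha]; ring
      · have := (f3 c a h ha).2; linarith
    have hip : (∑ a : Fin n, ∑ b : Fin n, ∑ c : Fin n,
        if a < b then T₀ a b c * D a b c else 0) = 0 := by
      have hrw : ∀ a b c : Fin n, (if a < b then T₀ a b c * D a b c else 0)
          = if b = N then
              (if a < N ∧ c < N ∧ a ≠ c then T₀ a N c * D a N c else 0) else 0 := by
        intro a b c
        by_cases hb : b = N
        · subst hb
          rw [if_pos rfl]
          by_cases ha : a < N
          · rw [if_pos ha]
            rcases lt_or_eq_lastIdx hn1 c with hc | hc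
            · by_cases hac : a = c
              · subst hac
                rw [if_neg (fun h => h.2.2 rfl), f1 a ha]
                ring
              · rw [if_pos ⟨ha, hc, hac⟩]
            · have hcN : c = N := hc
              rw [if_neg (fun h => absurd h.2.1 (by rw [hcN]; exact lt_irrefl N)), hcN,
                f2 a ha]
              ring
          · rw [if_neg ha, if_neg (fun h => ha h.1)]
        · rw [if_neg hb]
          by_cases hab : a < b
          · rw [if_pos hab]
            have hbN : b < N := (lt_or_eq_lastIdx hn1 b).resolve_right (fun h => hb h)
            rcases lt_or_eq_lastIdx hn1 c with hc | hc
            · rw [h₁' a b c hab hbN hc]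
              ring
            · have hcN : c = N := hc
              rw [hcN, (f3 a b hab hbN).1]
              ring
          · rw [if_neg hab]
      have step : (∑ a : Fin n, ∑ b : Fin n, ∑ c : Fin n,
          if a < b then T₀ a b c * D a b c else 0)
          = ∑ a : Fin n, ∑ c : Fin n,
            (if a < N ∧ c < N ∧ a ≠ c then T₀ a N c * D a N c else 0) := by
        refine Finset.sum_congr rfl fun a _ => ?_
        rw [Finset.sum_congr rfl fun b (_ : b ∈ univ) =>
          Finset.sum_congr rfl fun c (_ : c ∈ univ) => hrw a b c]
        rw [Finset.sum_congr rfl fun b (_ : b ∈ univ) =>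
          sum_if_const (b = N) (fun c => if a < N ∧ c < N ∧ a ≠ c then T₀ a N c * D a N c else 0)]
        rw [Finset.sum_ite_eq' univ N
          (fun _ => ∑ c : Fin n, if a < N ∧ c < N ∧ a ≠ c then T₀ a N c * D a N c else 0)]
        simp
      rw [step]
      set f : Fin n → Fin n → ℝ :=
        fun a c => if a < N ∧ c < N ∧ a ≠ c then T₀ a N c * D a N c else 0 with hf
      have hanti : ∀ a c, f a c = - f c a := by
        intro a c
        simp only [hf]
        by_cases h : a < N ∧ c < N ∧ a ≠ c
        · rw [if_pos h, if_pos ⟨h.2.1, h.1, Ne.symm h.2.2⟩,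
            h₅' a c h.1 h.2.1 h.2.2, h₅' c a h.2.1 h.1 (Ne.symm h.2.2), f4 a c h.1 h.2.1]
          ring
        · rw [if_neg h, if_neg (fun hh => h ⟨hh.2.1, hh.1, Ne.symm hh.2.2⟩)]
          ring
      have hs : (∑ a : Fin n, ∑ c : Fin n, f a c)
          = - (∑ a : Fin n, ∑ c : Fin n, f a c) := by
        conv_lhs => rw [Finset.sum_comm]
        rw [← Finset.sum_neg_distrib]
        refine Finset.sum_congr rfl fun x _ => ?_
        rw [← Finset.sum_neg_distrib]
        exact Finset.sum_congr rfl fun y _ => hanti y x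
      linarith
    have hexp : (∑ a : Fin n, ∑ b : Fin n, ∑ c : Fin n, if a < b then (T a b c) ^ 2 else 0)
        = (∑ a : Fin n, ∑ b : Fin n, ∑ c : Fin n, if a < b then (T₀ a b c) ^ 2 else 0)
        + 2 * (∑ a : Fin n, ∑ b : Fin n, ∑ c : Fin n,
            if a < b then T₀ a b c * D a b c else 0)
        + (∑ a : Fin n, ∑ b : Fin n, ∑ c : Fin n, if a < b then (D a b c) ^ 2 else 0) := by
      have hterm : ∀ a b c : Fin n, (if a < b then (T a b c) ^ 2 else 0)
          = (if a < b then (T₀ a b c) ^ 2 else 0)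
          + 2 * (if a < b then T₀ a b c * D a b c else 0)
          + (if a < b then (D a b c) ^ 2 else 0) := by
        intro a b c
        by_cases h : a < b
        · rw [if_pos h, if_pos h, if_pos h, if_pos h, hDval]
          ring
        · rw [if_neg h, if_neg h, if_neg h, if_neg h]
          ring
      simp only [hterm, Finset.sum_add_distrib, Finset.mul_sum]
    have hDnz : ∃ a b c : Fin n, a < b ∧ D a b c ≠ 0 := by
      have hex : ∃ a b c : Fin n, D a b c ≠ 0 := by
        by_contra h
        push_neg at h
        exact hne (funext fun a => funext fun b => funext fun c => by
          have h0 := h a b c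
          rw [hDval] at h0
          linarith)
      obtain ⟨a, b, c, habc⟩ := hex
      rcases lt_trichotomy a b with h | h | h
      · exact ⟨a, b, c, h, habc⟩
      · exfalso; apply habc; subst h
        have := hDsk a a c
        linarith
      · refine ⟨b, a, c, h, fun h0 => habc ?_⟩
        have := hDsk a b c
        linarith
    have hpos : 0 < ∑ a : Fin n, ∑ b : Fin n, ∑ c : Fin n,
        if a < b then (D a b c) ^ 2 else 0 := by
      obtain ⟨a, b, c, hab, hD0⟩ := hDnz
      have hnn1 : ∀ (x y z : Fin n), (0:ℝ) ≤ if x < y then (D x y z) ^ 2 else 0 := by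
        intro x y z
        split_ifs
        · positivity
        · exact le_rfl
      have hnn2 : ∀ x y : Fin n, (0:ℝ) ≤ ∑ z : Fin n, if x < y then (D x y z) ^ 2 else 0 :=
        fun x y => Finset.sum_nonneg fun z _ => hnn1 x y z
      have hnn3 : ∀ x : Fin n, (0:ℝ) ≤ ∑ y : Fin n, ∑ z : Fin n,
          if x < y then (D x y z) ^ 2 else 0 :=
        fun x => Finset.sum_nonneg fun y _ => hnn2 x y
      refine Finset.sum_pos' (fun x _ => hnn3 x) ⟨a, mem_univ a, ?_⟩
      refine Finset.sum_pos' (fun y _ => hnn2 a y) ⟨b, mem_univ b, ?_⟩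
      refine Finset.sum_pos' (fun z _ => hnn1 a b z) ⟨c, mem_univ c, ?_⟩
      rw [if_pos hab]
      exact lt_of_le_of_ne (sq_nonneg _) (Ne.symm (pow_ne_zero 2 hD0))
    linarith
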